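/- Let m ≥ 1, let M, N ⊆ [m] with M ≠ ∅, and let D = aΔ_M + cΔ_N ⊆ E^m. Then the binary Gray image Φ(C^L_D) ⊆ F₂^{2^{|M|+|N|+1}} is an F₂-linear code of length 2^{|M|+|N|+1}, with 2^{2|M|} codewords (F₂-dimension 2|M|), and minimum nonzero Hamming weight 2^{|M|+|N|−1}. Moreover, if |M|+|N| ≥ 3, then Φ(C^L_D) is self-orthogonal. -/
import Mathlib


open Finset

/-- The simplicial complex `Δ_M ⊆ 𝔽₂^m` generated by `M ⊆ [m]`:
all vectors whose support is contained in `M`. -/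
def deltaC {m : ℕ} (M : Finset (Fin m)) : Finset (Fin m → ZMod 2) :=
  Finset.univ.filter (fun w => ∀ i, w i ≠ 0 → i ∈ M)

/-- Dot product over `𝔽₂`. -/
def dotp {m : ℕ} (x y : Fin m → ZMod 2) : ZMod 2 := ∑ i, x i * y i

/-- The Gray map on a single element `a·s + c·t ↔ (s, t)` of `E = 𝔽₂ × 𝔽₂`:
`Φ(as + ct) = (t, s + t)`. -/
def grayPair (e : ZMod 2 × ZMod 2) : Fin 2 → ZMod 2 := ![e.2, e.1 + e.2]

/-- The left codeword `c^L_D(v)` for `v = aα + cβ ↔ (α, β)`: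
its coordinate at `d = (t₁, t₂) ∈ D` is `a(α·t₁) + c(β·t₁) ↔ (α·t₁, β·t₁)`. -/
def cwL {m : ℕ} (Ds : Finset ((Fin m → ZMod 2) × (Fin m → ZMod 2)))
    (v : (Fin m → ZMod 2) × (Fin m → ZMod 2)) :
    {d // d ∈ Ds} → ZMod 2 × ZMod 2 :=
  fun d => (dotp v.1 d.1.1, dotp v.2 d.1.1)

/-- The Gray image `Φ(c^L_D(v)) ∈ 𝔽₂^{2|D|}` of the left codeword `c^L_D(v)`;
its Hamming weight (`hammingNorm`) is the Lee weight of `c^L_D(v)`. -/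
def gcwL {m : ℕ} (Ds : Finset ((Fin m → ZMod 2) × (Fin m → ZMod 2)))
    (v : (Fin m → ZMod 2) × (Fin m → ZMod 2)) :
    {d // d ∈ Ds} × Fin 2 → ZMod 2 :=
  fun x => grayPair (cwL Ds v x.1) x.2

/-- The right codeword `c^R_D(v)` for `v = aα + cβ ↔ (α, β)`:
its coordinate at `d = (t₁, t₂) ∈ D` is `a(t₁·α) + c(t₂·α) ↔ (t₁·α, t₂·α)`. -/
def cwR {m : ℕ} (Ds : Finset ((Fin m → ZMod 2) × (Fin m → ZMod 2)))
    (v : (Fin m → ZMod 2) × (Fin m → ZMod 2)) :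
    {d // d ∈ Ds} → ZMod 2 × ZMod 2 :=
  fun d => (dotp d.1.1 v.1, dotp d.1.2 v.1)

/-- The Gray image `Φ(c^R_D(v)) ∈ 𝔽₂^{2|D|}` of the right codeword `c^R_D(v)`;
its Hamming weight (`hammingNorm`) is the Lee weight of `c^R_D(v)`. -/
def gcwR {m : ℕ} (Ds : Finset ((Fin m → ZMod 2) × (Fin m → ZMod 2)))
    (v : (Fin m → ZMod 2) × (Fin m → ZMod 2)) :
    {d // d ∈ Ds} × Fin 2 → ZMod 2 :=
  fun x => grayPair (cwR Ds v x.1) x.2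

section auxlemmas
variable {m : ℕ}

lemma mem_deltaC {M : Finset (Fin m)} {w : Fin m → ZMod 2} :
    w ∈ deltaC M ↔ ∀ i, w i ≠ 0 → i ∈ M := by
  simp [deltaC]

lemma zero_mem_deltaC (M : Finset (Fin m)) : (0 : Fin m → ZMod 2) ∈ deltaC M := by
  simp [mem_deltaC]

lemma add_mem_deltaC {M : Finset (Fin m)} {s t : Fin m → ZMod 2}
    (hs : s ∈ deltaC M) (ht : t ∈ deltaC M) : s + t ∈ deltaC M := by
  rw [mem_deltaC] at *
  intro i hi
  by_contra hiM
  have h1 : s i = 0 := by by_contra h; exact hiM (hs i h)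
  have h2 : t i = 0 := by by_contra h; exact hiM (ht i h)
  exact hi (by simp [Pi.add_apply, h1, h2])

lemma add_self_fun (t : Fin m → ZMod 2) : t + t = 0 := by
  funext i
  have : ∀ x : ZMod 2, x + x = 0 := by decide
  exact this (t i)

lemma dotp_add_left (x y z : Fin m → ZMod 2) : dotp (x + y) z = dotp x z + dotp y z := by
  simp [dotp, add_mul, Finset.sum_add_distrib]

lemma dotp_add_right (x y z : Fin m → ZMod 2) : dotp x (y + z) = dotp x y + dotp x z := by
  simp [dotp, mul_add, Finset.sum_add_distrib]

lemma dotp_zero_left (z : Fin m → ZMod 2) : dotp 0 z = 0 := by simp [dotp]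

def evec (i₀ : Fin m) : Fin m → ZMod 2 := fun j => if j = i₀ then 1 else 0

lemma evec_mem_deltaC {M : Finset (Fin m)} {i₀ : Fin m} (h : i₀ ∈ M) : evec i₀ ∈ deltaC M := by
  rw [mem_deltaC]
  intro i hi
  by_cases hii : i = i₀
  · subst hii; exact h
  · simp [evec, hii] at hi

lemma dotp_evec (γ : Fin m → ZMod 2) (i₀ : Fin m) : dotp γ (evec i₀) = γ i₀ := by
  simp [dotp, evec, mul_ite]

lemma dotp_congr_left {M : Finset (Fin m)} {f g t : Fin m → ZMod 2}
    (ht : t ∈ deltaC M) (h : ∀ i ∈ M, f i = g i) : dotp f t = dotp g t := by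
  unfold dotp
  apply Finset.sum_congr rfl
  intro i _
  by_cases hi : t i = 0
  · simp [hi]
  · rw [h i (mem_deltaC.mp ht i hi)]

lemma card_filter_shift {M : Finset (Fin m)} (t₀ : Fin m → ZMod 2) (h₀ : t₀ ∈ deltaC M)
    (Q : (Fin m → ZMod 2) → Prop) [DecidablePred Q] :
    ((deltaC M).filter Q).card = ((deltaC M).filter (fun t => Q (t + t₀))).card := by
  have hinv : ∀ t : Fin m → ZMod 2, t + t₀ + t₀ = t := by
    intro t; rw [add_assoc, add_self_fun, add_zero]
  apply Finset.card_bij' (fun t _ => t + t₀) (fun t _ => t + t₀)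
  · intro a ha
    rw [Finset.mem_filter] at ha ⊢
    exact ⟨add_mem_deltaC ha.1 h₀, by rw [hinv]; exact ha.2⟩
  · intro a ha
    rw [Finset.mem_filter] at ha ⊢
    exact ⟨add_mem_deltaC ha.1 h₀, ha.2⟩
  · intro a _; exact hinv a
  · intro a _; exact hinv a

def extM (M : Finset (Fin m)) (f : ↥M → ZMod 2) : Fin m → ZMod 2 :=
  fun i => if h : i ∈ M then f ⟨i, h⟩ else 0

lemma extM_mem (M : Finset (Fin m)) (f : ↥M → ZMod 2) : extM M f ∈ deltaC M := by
  rw [mem_deltaC]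
  intro i hi
  by_contra h
  simp [extM, h] at hi

lemma extM_apply {M : Finset (Fin m)} (f : ↥M → ZMod 2) {i : Fin m} (h : i ∈ M) :
    extM M f i = f ⟨i, h⟩ := dif_pos h

lemma card_deltaC (M : Finset (Fin m)) : (deltaC M).card = 2 ^ M.card := by
  have h : (deltaC M).card = Fintype.card (↥M → ZMod 2) := by
    rw [← Finset.card_univ]
    apply Finset.card_bij' (fun w _ => fun i : ↥M => w i.1) (fun f _ => extM M f)
    · intro a _; exact Finset.mem_univ _
    · intro f _; exact extM_mem M f
    · intro w hw
      funext i
      by_cases h : i ∈ M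
      · exact extM_apply _ h
      · have : w i = 0 := by
          by_contra hne; exact h (mem_deltaC.mp hw i hne)
        rw [this]; simp [extM, h]
    · intro f _
      funext i
      exact extM_apply f i.2
  rw [h, Fintype.card_fun, Fintype.card_coe]
  norm_num

lemma card_fiber_single {M : Finset (Fin m)} (γ : Fin m → ZMod 2)
    (h : ((deltaC M).filter (fun t => dotp γ t = 1)).Nonempty) :
    2 * ((deltaC M).filter (fun t => dotp γ t = 1)).card = (deltaC M).card := by
  obtain ⟨t₀, ht₀⟩ := h
  rw [Finset.mem_filter] at ht₀
  obtain ⟨h₀, e1⟩ := ht₀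
  have key : ∀ x : ZMod 2, x + 1 = 1 ↔ x = 0 := by decide
  have key2 : ∀ x : ZMod 2, ¬(x = 1) ↔ x = 0 := by decide
  have hshift := card_filter_shift t₀ h₀ (fun t => dotp γ t = 1)
  have heq : ((deltaC M).filter (fun t => dotp γ (t + t₀) = 1)) =
      ((deltaC M).filter (fun t => dotp γ t = 0)) := by
    apply Finset.filter_congr
    intro t _
    rw [dotp_add_right, e1, key]
  have hpart := Finset.card_filter_add_card_filter_not
    (s := deltaC M) (p := fun t => dotp γ t = 1)
  have heq2 : ((deltaC M).filter (fun t => ¬ dotp γ t = 1)) =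
      ((deltaC M).filter (fun t => dotp γ t = 0)) := by
    apply Finset.filter_congr
    intro t _; rw [key2]
  rw [heq2] at hpart
  rw [heq] at hshift
  omega

lemma card_fiber_pair {M : Finset (Fin m)} (γ δ : Fin m → ZMod 2) (p : ZMod 2 × ZMod 2)
    (h : ((deltaC M).filter (fun t => (dotp γ t, dotp δ t) = p)).Nonempty) :
    ((deltaC M).filter (fun t => (dotp γ t, dotp δ t) = p)).card =
    ((deltaC M).filter (fun t => (dotp γ t, dotp δ t) = (0, 0))).card := by
  obtain ⟨t₀, ht₀⟩ := h
  rw [Finset.mem_filter] at ht₀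
  obtain ⟨h₀, e⟩ := ht₀
  rw [Prod.mk.injEq] at e
  have key : ∀ x y : ZMod 2, x + y = 0 ↔ x = y := by decide
  have hshift := card_filter_shift t₀ h₀ (fun t => (dotp γ t, dotp δ t) = (0,0))
  have heq : ((deltaC M).filter (fun t => (dotp γ (t + t₀), dotp δ (t + t₀)) = (0,0))) =
      ((deltaC M).filter (fun t => (dotp γ t, dotp δ t) = p)) := by
    apply Finset.filter_congr
    intro t _
    rw [Prod.mk.injEq, Prod.mk.injEq, dotp_add_right, dotp_add_right, e.1, e.2, key, key]
    try tauto
  rw [heq] at hshift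
  omega

lemma even_card_fiber {M : Finset (Fin m)} (h3 : 3 ≤ M.card) (γ δ : Fin m → ZMod 2) :
    Even ((deltaC M).filter (fun t => (dotp γ t, dotp δ t) = (1, 1))).card := by
  set K := ((deltaC M).filter (fun t => (dotp γ t, dotp δ t) = ((0 : ZMod 2), (0 : ZMod 2)))) with hK
  have hfib : (deltaC M).card =
      ∑ p : ZMod 2 × ZMod 2, ((deltaC M).filter (fun t => (dotp γ t, dotp δ t) = p)).card :=
    Finset.card_eq_sum_card_fiberwise (fun t _ => Finset.mem_univ _)
  have hcases : ∀ p : ZMod 2 × ZMod 2,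
      ((deltaC M).filter (fun t => (dotp γ t, dotp δ t) = p)).card = 0 ∨
      ((deltaC M).filter (fun t => (dotp γ t, dotp δ t) = p)).card = K.card := by
    intro p
    by_cases hne : ((deltaC M).filter (fun t => (dotp γ t, dotp δ t) = p)).Nonempty
    · exact Or.inr (card_fiber_pair γ δ p hne)
    · left
      rw [Finset.not_nonempty_iff_eq_empty] at hne
      rw [hne]; rfl
  have hdvd : K.card ∣ (deltaC M).card := by
    rw [hfib]
    apply Finset.dvd_sum
    intro p _
    rcases hcases p with h | h <;> rw [h] <;> simp
  have hbound : (deltaC M).card ≤ 4 * K.card := by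
    rw [hfib]
    calc ∑ p : ZMod 2 × ZMod 2, ((deltaC M).filter (fun t => (dotp γ t, dotp δ t) = p)).card
        ≤ ∑ _p : ZMod 2 × ZMod 2, K.card := by
          apply Finset.sum_le_sum
          intro p _
          rcases hcases p with h | h <;> omega
      _ = 4 * K.card := by
          rw [Finset.sum_const, Finset.card_univ]
          have : Fintype.card (ZMod 2 × ZMod 2) = 4 := by simp
          rw [this]; simp [mul_comm]
  rw [card_deltaC] at hdvd hbound
  have hK2 : 2 ≤ K.card := by
    have h8 : (8 : ℕ) ≤ 2 ^ M.card := by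
      calc (8 : ℕ) = 2 ^ 3 := by norm_num
        _ ≤ 2 ^ M.card := Nat.pow_le_pow_right (by norm_num) h3
    omega
  obtain ⟨j, _, hj⟩ := (Nat.dvd_prime_pow Nat.prime_two).mp hdvd
  have hj1 : 1 ≤ j := by
    by_contra hj0
    push_neg at hj0
    interval_cases j
    simp at hj; omega
  have hKeven : Even K.card := by
    rw [hj]
    obtain ⟨j', rfl⟩ : ∃ j', j = j' + 1 := ⟨j - 1, by omega⟩
    rw [pow_succ]
    exact ⟨2 ^ j', by ring⟩
  rcases hcases (1, 1) with h | h <;> rw [h]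
  · exact Even.zero
  · exact hKeven

lemma sum_gray_index {β : Type} [AddCommMonoid β]
    (Ds : Finset ((Fin m → ZMod 2) × (Fin m → ZMod 2)))
    (F : ((Fin m → ZMod 2) × (Fin m → ZMod 2)) → Fin 2 → β) :
    ∑ x : {d // d ∈ Ds} × Fin 2, F x.1.1 x.2 = ∑ d ∈ Ds, (F d 0 + F d 1) := by
  rw [Fintype.sum_prod_type]
  have h1 : ∀ a : {d // d ∈ Ds}, ∑ b : Fin 2, F a.1 b = F a.1 0 + F a.1 1 := fun a =>
    Fin.sum_univ_two _
  simp only [h1]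
  exact Finset.sum_coe_sort Ds (fun d => F d 0 + F d 1)

lemma gcwL_eval {Ds : Finset ((Fin m → ZMod 2) × (Fin m → ZMod 2))}
    (v : (Fin m → ZMod 2) × (Fin m → ZMod 2)) (x : {d // d ∈ Ds} × Fin 2) :
    gcwL Ds v x = grayPair (dotp v.1 x.1.1.1, dotp v.2 x.1.1.1) x.2 := rfl

lemma grayPair_zero (e : ZMod 2 × ZMod 2) : grayPair e 0 = e.2 := rfl
lemma grayPair_one (e : ZMod 2 × ZMod 2) : grayPair e 1 = e.1 + e.2 := rfl

lemma grayPair_add : ∀ (a b c d : ZMod 2) (j : Fin 2),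
    grayPair (a + c, b + d) j = grayPair (a, b) j + grayPair (c, d) j := by decide

lemma grayPair_ne_zero : ∀ (s t : ZMod 2) (j : Fin 2),
    grayPair (s, t) j ≠ 0 → t = 1 ∨ s + t = 1 := by decide

lemma weight_formula {M N : Finset (Fin m)}
    (Ds : Finset ((Fin m → ZMod 2) × (Fin m → ZMod 2)))
    (hDs : Ds = deltaC M ×ˢ deltaC N)
    (v : (Fin m → ZMod 2) × (Fin m → ZMod 2)) :
    hammingNorm (gcwL Ds v) = (deltaC N).card *
      (((deltaC M).filter (fun t => dotp v.2 t = 1)).card +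
       ((deltaC M).filter (fun t => dotp (v.1 + v.2) t = 1)).card) := by
  classical
  have hne : ∀ x : ZMod 2, (¬ x = 0) ↔ x = 1 := by decide
  have h1 : hammingNorm (gcwL Ds v) =
      ∑ x : {d // d ∈ Ds} × Fin 2, (if gcwL Ds v x ≠ 0 then 1 else 0) := by
    rw [hammingNorm, Finset.card_filter]
  rw [h1]
  have h4 : (∑ x : {d // d ∈ Ds} × Fin 2, if gcwL Ds v x ≠ 0 then 1 else 0) =
      ∑ d ∈ Ds, ((if grayPair (dotp v.1 d.1, dotp v.2 d.1) 0 ≠ 0 then 1 else 0) +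
        (if grayPair (dotp v.1 d.1, dotp v.2 d.1) 1 ≠ 0 then 1 else 0)) :=
    sum_gray_index Ds (fun d j => if grayPair (dotp v.1 d.1, dotp v.2 d.1) j ≠ 0 then 1 else 0)
  rw [h4, hDs, Finset.sum_product]
  have h3 : ∀ t₁ t₂ : Fin m → ZMod 2,
      ((if grayPair (dotp v.1 t₁, dotp v.2 t₁) 0 ≠ 0 then 1 else 0) +
       (if grayPair (dotp v.1 t₁, dotp v.2 t₁) 1 ≠ 0 then 1 else 0) : ℕ) =
      ((if dotp v.2 t₁ = 1 then 1 else 0) + (if dotp (v.1 + v.2) t₁ = 1 then 1 else 0)) := by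
    intro t₁ t₂
    rw [grayPair_zero, grayPair_one]
    congr 1
    · simp only [hne]
    · have : dotp v.1 t₁ + dotp v.2 t₁ = dotp (v.1 + v.2) t₁ := (dotp_add_left _ _ _).symm
      rw [this]
      simp only [hne]
  calc ∑ t₁ ∈ deltaC M, ∑ t₂ ∈ deltaC N,
        ((if grayPair (dotp v.1 t₁, dotp v.2 t₁) 0 ≠ 0 then 1 else 0) +
         (if grayPair (dotp v.1 t₁, dotp v.2 t₁) 1 ≠ 0 then 1 else 0) : ℕ)
      = ∑ t₁ ∈ deltaC M, (deltaC N).card *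
          ((if dotp v.2 t₁ = 1 then 1 else 0) + (if dotp (v.1 + v.2) t₁ = 1 then 1 else 0)) := by
        apply Finset.sum_congr rfl
        intro t₁ _
        rw [Finset.sum_congr rfl (fun t₂ _ => h3 t₁ t₂), Finset.sum_const, smul_eq_mul]
    _ = (deltaC N).card *
        (((deltaC M).filter (fun t => dotp v.2 t = 1)).card +
         ((deltaC M).filter (fun t => dotp (v.1 + v.2) t = 1)).card) := by
        rw [← Finset.mul_sum, Finset.sum_add_distrib]
        congr 1
        rw [← Finset.card_filter, ← Finset.card_filter]

end auxlemmas

theorem stmt_5 {m : ℕ} (hm : 1 ≤ m) (M N : Finset (Fin m))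
    (hM : M ≠ ∅)
    (Ds : Finset ((Fin m → ZMod 2) × (Fin m → ZMod 2)))
    (hDs : Ds = deltaC M ×ˢ deltaC N) :
    (2 * Ds.card = 2 ^ (M.card + N.card + 1)) ∧
    ((Finset.univ : Finset ((Fin m → ZMod 2) × (Fin m → ZMod 2))).image (gcwL Ds)).card = 2 ^ (2 * M.card) ∧
    (∀ v w : (Fin m → ZMod 2) × (Fin m → ZMod 2), ∃ z : (Fin m → ZMod 2) × (Fin m → ZMod 2), gcwL Ds z = gcwL Ds v + gcwL Ds w) ∧
    (∀ v : (Fin m → ZMod 2) × (Fin m → ZMod 2), gcwL Ds v ≠ 0 → 2 ^ (M.card + N.card - 1) ≤ hammingNorm (gcwL Ds v)) ∧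
    (∃ v : (Fin m → ZMod 2) × (Fin m → ZMod 2), gcwL Ds v ≠ 0 ∧ hammingNorm (gcwL Ds v) = 2 ^ (M.card + N.card - 1)) ∧
    (3 ≤ M.card + N.card →
      ∀ v w : (Fin m → ZMod 2) × (Fin m → ZMod 2), ∑ i, gcwL Ds v i * gcwL Ds w i = 0) := by
  classical
  have hkM : 1 ≤ M.card := Finset.card_pos.mpr (Finset.nonempty_iff_ne_empty.mpr hM)
  refine ⟨?_, ?_, ?_, ?_, ?_, ?_⟩
  · -- length
    rw [hDs, Finset.card_product, card_deltaC, card_deltaC, ← pow_add, pow_succ]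
    ring
  · -- number of codewords
    have hsame : ∀ v : (Fin m → ZMod 2) × (Fin m → ZMod 2),
        gcwL Ds (extM M (fun i => v.1 i.1), extM M (fun i => v.2 i.1)) = gcwL Ds v := by
      intro v
      funext x
      have hd' : x.1.1.1 ∈ deltaC M := by
        have hx2 : (x.1 : (Fin m → ZMod 2) × (Fin m → ZMod 2)) ∈ deltaC M ×ˢ deltaC N := by
          rw [← hDs]; exact x.1.2
        exact (Finset.mem_product.mp hx2).1
      rw [gcwL_eval, gcwL_eval]
      have e1 : dotp (extM M (fun i => v.1 i.1)) x.1.1.1 = dotp v.1 x.1.1.1 :=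
        dotp_congr_left hd' (fun i hi => extM_apply _ hi)
      have e2 : dotp (extM M (fun i => v.2 i.1)) x.1.1.1 = dotp v.2 x.1.1.1 :=
        dotp_congr_left hd' (fun i hi => extM_apply _ hi)
      rw [e1, e2]
    have hinj : Function.Injective
        (fun p : (↥M → ZMod 2) × (↥M → ZMod 2) => gcwL Ds (extM M p.1, extM M p.2)) := by
      intro p q h
      simp only at h
      have key : ∀ i : ↥M,
          extM M p.1 i.1 = extM M q.1 i.1 ∧ extM M p.2 i.1 = extM M q.2 i.1 := by
        intro i
        have hd : ((evec i.1, (0 : Fin m → ZMod 2))) ∈ Ds := by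
          rw [hDs, Finset.mem_product]
          exact ⟨evec_mem_deltaC i.2, zero_mem_deltaC N⟩
        have h0 := congrFun h (⟨_, hd⟩, 0)
        have h1 := congrFun h (⟨_, hd⟩, 1)
        rw [gcwL_eval, gcwL_eval, grayPair_zero] at h0
        rw [gcwL_eval, gcwL_eval, grayPair_one] at h1
        simp only [dotp_evec] at h0 h1
        refine ⟨?_, h0⟩
        rw [h0] at h1
        exact add_right_cancel h1
      have hp1 : p.1 = q.1 := by
        funext i
        have := (key i).1
        rw [extM_apply p.1 i.2, extM_apply q.1 i.2] at this
        exact this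
      have hp2 : p.2 = q.2 := by
        funext i
        have := (key i).2
        rw [extM_apply p.2 i.2, extM_apply q.2 i.2] at this
        exact this
      exact Prod.ext hp1 hp2
    have himgeq : ((Finset.univ : Finset ((Fin m → ZMod 2) × (Fin m → ZMod 2))).image (gcwL Ds)) =
        (Finset.univ : Finset ((↥M → ZMod 2) × (↥M → ZMod 2))).image
          (fun p => gcwL Ds (extM M p.1, extM M p.2)) := by
      ext y
      simp only [Finset.mem_image, Finset.mem_univ, true_and]
      constructor
      · rintro ⟨v, rfl⟩
        exact ⟨(fun i => v.1 i.1, fun i => v.2 i.1), hsame v⟩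
      · rintro ⟨p, rfl⟩
        exact ⟨(extM M p.1, extM M p.2), rfl⟩
    rw [himgeq, Finset.card_image_of_injective _ hinj, Finset.card_univ, Fintype.card_prod,
      Fintype.card_fun, Fintype.card_coe]
    have : Fintype.card (ZMod 2) = 2 := by simp
    rw [this, ← pow_add]
    congr 1
    omega
  · -- linearity
    intro v w
    refine ⟨v + w, ?_⟩
    funext x
    obtain ⟨d, j⟩ := x
    have hadd1 : (v + w).1 = v.1 + w.1 := rfl
    have hadd2 : (v + w).2 = v.2 + w.2 := rfl
    show gcwL Ds (v + w) (d, j) = gcwL Ds v (d, j) + gcwL Ds w (d, j)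
    rw [gcwL_eval, gcwL_eval, gcwL_eval, hadd1, hadd2, dotp_add_left, dotp_add_left]
    exact grayPair_add _ _ _ _ _
  · -- minimum distance lower bound
    intro v hv
    have hex : ∃ x, gcwL Ds v x ≠ 0 := by
      by_contra h
      push_neg at h
      exact hv (funext h)
    obtain ⟨⟨⟨d, hd⟩, j⟩, hx⟩ := hex
    have hd' : d.1 ∈ deltaC M := (Finset.mem_product.mp (hDs ▸ hd)).1
    have hone : ∀ x : ZMod 2, x ≠ 0 → x = 1 := by decide
    rw [weight_formula Ds hDs v]
    have hbig : 2 * 2 ^ (M.card - 1) = 2 ^ M.card := by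
      rw [← pow_succ']
      congr 1
      omega
    have hmain : 2 ^ (M.card - 1) ≤
        ((deltaC M).filter (fun t => dotp v.2 t = 1)).card +
        ((deltaC M).filter (fun t => dotp (v.1 + v.2) t = 1)).card := by
      rw [gcwL_eval] at hx
      rcases grayPair_ne_zero _ _ _ hx with h1 | h1
      · have h1' : dotp v.2 d.1 = 1 := h1
        have hne : ((deltaC M).filter (fun t => dotp v.2 t = 1)).Nonempty :=
          ⟨d.1, Finset.mem_filter.mpr ⟨hd', h1'⟩⟩
        have hc := card_fiber_single _ hne
        rw [card_deltaC] at hc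
        omega
      · have h1' : dotp (v.1 + v.2) d.1 = 1 := by
          rw [dotp_add_left]
          exact h1
        have hne : ((deltaC M).filter (fun t => dotp (v.1 + v.2) t = 1)).Nonempty :=
          ⟨d.1, Finset.mem_filter.mpr ⟨hd', h1'⟩⟩
        have hc := card_fiber_single _ hne
        rw [card_deltaC] at hc
        omega
    rw [card_deltaC]
    calc 2 ^ (M.card + N.card - 1) = 2 ^ N.card * 2 ^ (M.card - 1) := by
          rw [← pow_add]
          congr 1
          omega
      _ ≤ _ := Nat.mul_le_mul_left _ hmain
  · -- minimum distance achieved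
    obtain ⟨i₀, hi₀⟩ := Finset.nonempty_iff_ne_empty.mpr hM
    have hd : ((evec i₀, (0 : Fin m → ZMod 2))) ∈ Ds := by
      rw [hDs, Finset.mem_product]
      exact ⟨evec_mem_deltaC hi₀, zero_mem_deltaC N⟩
    have hev1 : evec i₀ i₀ = 1 := by simp [evec]
    refine ⟨(evec i₀, 0), ?_, ?_⟩
    · intro h0
      have := congrFun h0 (⟨_, hd⟩, 1)
      rw [gcwL_eval, grayPair_one] at this
      simp only [dotp_evec, dotp_zero_left, hev1] at this
      simp at this
    · rw [weight_formula Ds hDs]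
      have e1 : (((deltaC M).filter
          (fun t => dotp ((evec i₀, (0 : Fin m → ZMod 2))).2 t = 1)).card) = 0 := by
        rw [Finset.card_eq_zero]
        apply Finset.filter_false_of_mem
        intro t _
        rw [dotp_zero_left]
        exact zero_ne_one
      have hsum : ((evec i₀, (0 : Fin m → ZMod 2))).1 + ((evec i₀, (0 : Fin m → ZMod 2))).2
          = evec i₀ := by simp
      have hne : ((deltaC M).filter (fun t => dotp (evec i₀) t = 1)).Nonempty := by
        refine ⟨evec i₀, Finset.mem_filter.mpr ⟨evec_mem_deltaC hi₀, ?_⟩⟩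
        rw [dotp_evec, hev1]
      have hc := card_fiber_single _ hne
      rw [card_deltaC] at hc
      have hbig : 2 * 2 ^ (M.card - 1) = 2 ^ M.card := by
        rw [← pow_succ']
        congr 1
        omega
      have hn2 : ((deltaC M).filter (fun t => dotp (evec i₀) t = 1)).card = 2 ^ (M.card - 1) := by
        omega
      rw [e1, hsum, hn2, card_deltaC, zero_add, ← pow_add]
      congr 1
      omega
  · -- self-orthogonality
    intro h3 v w
    have h4 : (∑ i, gcwL Ds v i * gcwL Ds w i) =
        ∑ d ∈ Ds, ((grayPair (dotp v.1 d.1, dotp v.2 d.1) 0 * grayPair (dotp w.1 d.1, dotp w.2 d.1) 0) +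
          (grayPair (dotp v.1 d.1, dotp v.2 d.1) 1 * grayPair (dotp w.1 d.1, dotp w.2 d.1) 1)) :=
      sum_gray_index Ds
        (fun d j => grayPair (dotp v.1 d.1, dotp v.2 d.1) j * grayPair (dotp w.1 d.1, dotp w.2 d.1) j)
    rw [h4, hDs, Finset.sum_product]
    have hsummand : ∀ t₁ : Fin m → ZMod 2,
        ((grayPair (dotp v.1 t₁, dotp v.2 t₁) 0 * grayPair (dotp w.1 t₁, dotp w.2 t₁) 0) +
         (grayPair (dotp v.1 t₁, dotp v.2 t₁) 1 * grayPair (dotp w.1 t₁, dotp w.2 t₁) 1)) =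
        (dotp v.2 t₁ * dotp w.2 t₁ + dotp (v.1 + v.2) t₁ * dotp (w.1 + w.2) t₁) := by
      intro t₁
      rw [grayPair_zero, grayPair_zero, grayPair_one, grayPair_one, dotp_add_left, dotp_add_left]
    by_cases hM3 : 3 ≤ M.card
    · -- each inner functional-product sum vanishes
      have horto : ∀ γ γ' : Fin m → ZMod 2,
          (∑ t ∈ deltaC M, dotp γ t * dotp γ' t) = 0 := by
        intro γ γ'
        have key : ∀ x y : ZMod 2,
            x * y = if (x, y) = ((1 : ZMod 2), (1 : ZMod 2)) then 1 else 0 := by decide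
        calc ∑ t ∈ deltaC M, dotp γ t * dotp γ' t
            = ∑ t ∈ deltaC M,
              (if (dotp γ t, dotp γ' t) = ((1 : ZMod 2), (1 : ZMod 2)) then (1 : ZMod 2) else 0) := by
              apply Finset.sum_congr rfl
              intro t _
              rw [key]
          _ = (((deltaC M).filter
              (fun t => (dotp γ t, dotp γ' t) = ((1 : ZMod 2), (1 : ZMod 2)))).card : ZMod 2) :=
              Finset.sum_boole _ _
          _ = 0 := by
              rw [ZMod.natCast_eq_zero_iff]
              exact (even_card_fiber hM3 γ γ').two_dvd
      calc ∑ t₁ ∈ deltaC M, ∑ t₂ ∈ deltaC N,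
            ((grayPair (dotp v.1 t₁, dotp v.2 t₁) 0 * grayPair (dotp w.1 t₁, dotp w.2 t₁) 0) +
             (grayPair (dotp v.1 t₁, dotp v.2 t₁) 1 * grayPair (dotp w.1 t₁, dotp w.2 t₁) 1))
          = ∑ t₁ ∈ deltaC M, (deltaC N).card •
              (dotp v.2 t₁ * dotp w.2 t₁ + dotp (v.1 + v.2) t₁ * dotp (w.1 + w.2) t₁) := by
            apply Finset.sum_congr rfl
            intro t₁ _
            rw [Finset.sum_congr rfl (fun t₂ _ => hsummand t₁), Finset.sum_const]
        _ = (deltaC N).card • ∑ t₁ ∈ deltaC M,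
              (dotp v.2 t₁ * dotp w.2 t₁ + dotp (v.1 + v.2) t₁ * dotp (w.1 + w.2) t₁) :=
            (Finset.smul_sum).symm
        _ = 0 := by
            rw [Finset.sum_add_distrib, horto, horto, add_zero, smul_zero]
    · -- then N is large, and the repetition factor 2^{|N|} kills everything
      have hN1 : 1 ≤ N.card := by omega
      have hcast : ((deltaC N).card : ZMod 2) = 0 := by
        rw [card_deltaC, ZMod.natCast_eq_zero_iff]
        exact dvd_pow_self 2 (by omega)
      calc ∑ t₁ ∈ deltaC M, ∑ t₂ ∈ deltaC N,
            ((grayPair (dotp v.1 t₁, dotp v.2 t₁) 0 * grayPair (dotp w.1 t₁, dotp w.2 t₁) 0) +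
             (grayPair (dotp v.1 t₁, dotp v.2 t₁) 1 * grayPair (dotp w.1 t₁, dotp w.2 t₁) 1))
          = ∑ t₁ ∈ deltaC M, (0 : ZMod 2) := by
            apply Finset.sum_congr rfl
            intro t₁ _
            rw [Finset.sum_const, nsmul_eq_mul, hcast, zero_mul]
        _ = 0 := Finset.sum_const_zero
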